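/- arXiv:math/0309111 — 3 statements merged into one kernel-verified Lean document; each statement's English description precedes it below -/
import Mathlib

section
/- For r = 3, 4, 5, 6, 7, 8, the number of classes E in ℤ^{r+1} with (E,E) = -1 and (E,-K) = 1 is 6, 10, 16, 27, 56, 240 respectively. -/
/-- The Del Pezzo intersection form on `ℤ^{r+1}`: `(l_0,l_0)=1`, `(l_i,l_i)=-1` for `i ≥ 1`,
`(l_i,l_j)=0` for `i ≠ j`. -/
def dpB {r : ℕ} (x y : Fin (r + 1) → ℤ) : ℤ :=
  x 0 * y 0 - ∑ i : Fin r, x i.succ * y i.succ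

/-- The anticanonical class `-K = 3 l_0 - l_1 - ⋯ - l_r`. -/
def negK {r : ℕ} : Fin (r + 1) → ℤ := fun i => if i = 0 then 3 else -1

/-- The standard basis vector `l_i`. -/
def l {r : ℕ} (i : Fin (r + 1)) : Fin (r + 1) → ℤ := fun j => if j = i then 1 else 0

/-- An exceptional class: `(E,E) = -1` and `(E,-K) = 1`. -/
def IsExc {r : ℕ} (E : Fin (r + 1) → ℤ) : Prop := dpB E E = -1 ∧ dpB E negK = 1

/-- A root: `(α,α) = -2` and `(α,-K) = 0`. -/
def IsRoot {r : ℕ} (a : Fin (r + 1) → ℤ) : Prop := dpB a a = -2 ∧ dpB a negK = 0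

/-- A ruling: `(D,D) = 0` and `(D,-K) = 2`. -/
def IsRuling {r : ℕ} (D : Fin (r + 1) → ℤ) : Prop := dpB D D = 0 ∧ dpB D negK = 2

/-- The reflection `σ_α(x) = x + (x,α) α`. -/
def reflct {r : ℕ} (a x : Fin (r + 1) → ℤ) : Fin (r + 1) → ℤ :=
  fun i => x i + dpB x a * a i

/-!
Writing `E = (a; b_1, …, b_r)`, the two conditions say `∑ bᵢ = 1 - 3a` and `∑ bᵢ² = a² + 1`.
Cauchy–Schwarz gives `(1 - 3a)² ≤ r (a² + 1) ≤ 8 (a² + 1)`, i.e. `-1 ≤ a ≤ 7`, and then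
`bᵢ² ≤ 50`. So for `r ≤ 8` the exceptional classes form an explicit finite set, which is counted
by a pruned enumeration evaluated in the kernel.
-/

open Finset

/-- Branches violating `q ≥ 0` or the Cauchy–Schwarz bound `s² ≤ n q` are cut off, which keeps
the enumeration small enough for the kernel to evaluate. -/
noncomputable def sumSqSolutions (b : ℤ) : (n : ℕ) → ℤ → ℤ → Finset (Fin n → ℤ)
  | 0, s, q => if s = 0 ∧ q = 0 then {0} else ∅
  | n + 1, s, q =>
    if q < 0 ∨ (n + 1 : ℤ) * q < s ^ 2 then ∅
    else (Icc (-b) b).biUnion fun t =>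
      (sumSqSolutions b n (s - t) (q - t ^ 2)).image (Fin.cons t)

theorem sq_sum_le_card_mul_sum_sq_fin {n : ℕ} (x : Fin n → ℤ) :
    (∑ i, x i) ^ 2 ≤ n * ∑ i, x i ^ 2 := by
  simpa using sq_sum_le_card_mul_sum_sq (s := univ) (f := x)

theorem mem_sumSqSolutions (b : ℤ) {n : ℕ} (x : Fin n → ℤ) (s q : ℤ) :
    x ∈ sumSqSolutions b n s q ↔
      (∀ i, x i ∈ Icc (-b) b) ∧ ∑ i, x i = s ∧ ∑ i, x i ^ 2 = q := by
  induction n generalizing s q with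
  | zero =>
    simp only [sumSqSolutions, univ_eq_empty, sum_empty, IsEmpty.forall_iff, true_and]
    split_ifs with h <;> simp [Subsingleton.elim x 0, h, eq_comm]
  | succ n ih =>
    have hcons : ∀ t y, (Fin.cons t y : Fin (n + 1) → ℤ) = x ↔ t = x 0 ∧ y = Fin.tail x := by
      intro t y
      rw [← Fin.cons_self_tail x, Fin.cons_inj, Fin.cons_self_tail]
    simp only [sumSqSolutions]
    split_ifs with hprune
    · simp only [notMem_empty, false_iff, not_and]
      rintro - rfl rfl
      have := sq_sum_le_card_mul_sum_sq_fin x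
      have : 0 ≤ ∑ i, x i ^ 2 := sum_nonneg fun i _ => sq_nonneg (x i)
      push_cast at *
      rcases hprune with h | h <;> linarith
    · simp only [mem_biUnion, mem_image, ih, hcons, Fin.forall_fin_succ, Fin.sum_univ_succ]
      constructor
      · rintro ⟨t, ht, y, ⟨hy, hys, hyq⟩, rfl, rfl⟩
        exact ⟨⟨ht, hy⟩, by simp only [Fin.tail] at hys; linarith,
          by simp only [Fin.tail] at hyq; linarith⟩
      · rintro ⟨⟨h0, hy⟩, rfl, rfl⟩
        exact ⟨x 0, h0, Fin.tail x, ⟨hy, by simp [Fin.tail], by simp [Fin.tail]⟩, rfl, rfl⟩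

theorem dpB_self {r : ℕ} (x : Fin (r + 1) → ℤ) :
    dpB x x = x 0 ^ 2 - ∑ i : Fin r, x i.succ ^ 2 := by
  simp only [dpB, sq]

theorem dpB_negK {r : ℕ} (x : Fin (r + 1) → ℤ) :
    dpB x negK = 3 * x 0 + ∑ i : Fin r, x i.succ := by
  simp [dpB, negK, Fin.succ_ne_zero, mul_comm]

theorem isExc_iff {r : ℕ} (E : Fin (r + 1) → ℤ) :
    IsExc E ↔ ∑ i : Fin r, E i.succ = 1 - 3 * E 0 ∧ ∑ i : Fin r, E i.succ ^ 2 = E 0 ^ 2 + 1 := by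
  rw [IsExc, dpB_self, dpB_negK]
  constructor <;> rintro ⟨h₁, h₂⟩ <;> constructor <;> linarith

theorem IsExc.mem_Icc_zero {r : ℕ} (hr : r ≤ 8) {E : Fin (r + 1) → ℤ} (hE : IsExc E) :
    E 0 ∈ Icc (-1) 7 := by
  obtain ⟨hs, hq⟩ := (isExc_iff E).1 hE
  have hcs := sq_sum_le_card_mul_sum_sq_fin (Fin.tail E)
  simp only [Fin.tail, hs, hq] at hcs
  have : (r : ℤ) * (E 0 ^ 2 + 1) ≤ 8 * (E 0 ^ 2 + 1) := by gcongr; exact_mod_cast hr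
  rw [mem_Icc]
  constructor <;> nlinarith

theorem IsExc.mem_Icc_succ {r : ℕ} (hr : r ≤ 8) {E : Fin (r + 1) → ℤ} (hE : IsExc E) (i : Fin r) :
    E i.succ ∈ Icc (-7) 7 := by
  obtain ⟨-, hq⟩ := (isExc_iff E).1 hE
  have h0 := hE.mem_Icc_zero hr
  have hi : E i.succ ^ 2 ≤ ∑ j : Fin r, E j.succ ^ 2 :=
    single_le_sum (f := fun j : Fin r => E j.succ ^ 2) (fun j _ => sq_nonneg _) (mem_univ i)
  rw [mem_Icc] at h0 ⊢
  have hlt : E i.succ ^ 2 < (8 : ℤ) ^ 2 := by nlinarith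
  have := abs_lt_of_sq_lt_sq' hlt (by norm_num)
  omega

/-- Complete only for `r ≤ 8`, where the bounds `-1 ≤ E 0 ≤ 7` and `|E i| ≤ 7` hold. -/
noncomputable def exceptionalClasses (r : ℕ) : Finset (Fin (r + 1) → ℤ) :=
  (Icc (-1) 7).biUnion fun a =>
    (sumSqSolutions 7 r (1 - 3 * a) (a ^ 2 + 1)).image (Fin.cons a)

theorem coe_exceptionalClasses {r : ℕ} (hr : r ≤ 8) :
    (exceptionalClasses r : Set (Fin (r + 1) → ℤ)) = {E | IsExc E} := by
  ext E
  simp only [exceptionalClasses, coe_biUnion, coe_image, Set.mem_iUnion, Set.mem_image,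
    mem_coe, mem_sumSqSolutions, Set.mem_ofPred_eq]
  constructor
  · rintro ⟨a, -, y, ⟨-, hs, hq⟩, rfl⟩
    simp [isExc_iff, hs, hq]
  · intro hE
    refine ⟨E 0, hE.mem_Icc_zero hr, Fin.tail E, ⟨hE.mem_Icc_succ hr, ?_⟩, Fin.cons_self_tail E⟩
    simpa [Fin.tail] using (isExc_iff E).1 hE

/-- The number of exceptional classes for `r = 3,…,8` is `6, 10, 16, 27, 56, 240`. -/
theorem stmt1 (r N : ℕ)
    (h : (r, N) ∈ [(3, 6), (4, 10), (5, 16), (6, 27), (7, 56), (8, 240)]) :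
    {E : Fin (r + 1) → ℤ | IsExc E}.ncard = N := by
  simp only [List.mem_cons, Prod.mk.injEq, List.not_mem_nil, or_false] at h
  rcases h with ⟨rfl, rfl⟩ | ⟨rfl, rfl⟩ | ⟨rfl, rfl⟩ | ⟨rfl, rfl⟩ | ⟨rfl, rfl⟩ | ⟨rfl, rfl⟩ <;>
    rw [← coe_exceptionalClasses (by norm_num), Set.ncard_coe_finset] <;> decide +kernel
end

section
/- Every root α (i.e., (α,α) = -2 and (α,-K) = 0) in ℤ^{r+1}, for 3 ≤ r ≤ 8, can be written as α = E - F where E and F are exceptional classes with (E,F) = 0. -/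
lemma dpB_add_left {r : ℕ} (x y z : Fin (r + 1) → ℤ) :
    dpB (x + y) z = dpB x z + dpB y z := by
  simp [dpB, add_mul, Finset.sum_add_distrib]; ring

lemma dpB_sub_left {r : ℕ} (x y z : Fin (r + 1) → ℤ) :
    dpB (x - y) z = dpB x z - dpB y z := by
  simp [dpB, sub_mul, Finset.sum_sub_distrib]; ring

lemma dpB_comm {r : ℕ} (x y : Fin (r + 1) → ℤ) : dpB x y = dpB y x := by
  simp [dpB, mul_comm]

lemma dpB_add_right {r : ℕ} (x y z : Fin (r + 1) → ℤ) :
    dpB z (x + y) = dpB z x + dpB z y := by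
  rw [dpB_comm, dpB_add_left, dpB_comm x z, dpB_comm y z]

lemma dpB_sub_right {r : ℕ} (x y z : Fin (r + 1) → ℤ) :
    dpB z (x - y) = dpB z x - dpB z y := by
  rw [dpB_comm, dpB_sub_left, dpB_comm x z, dpB_comm y z]

lemma dpB_l_succ {r : ℕ} (x : Fin (r + 1) → ℤ) (k : Fin r) :
    dpB x (l k.succ) = -x k.succ := by
  simp [dpB, l, (Fin.succ_ne_zero k).symm, Fin.succ_inj]

lemma dpB_l_negK {r : ℕ} (k : Fin r) : dpB (l k.succ) (negK (r := r)) = 1 := by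
  simp [dpB, l, negK, Fin.succ_ne_zero, (Fin.succ_ne_zero k).symm, Fin.succ_inj]

/-- Every root has a coordinate equal to `±1` among `l_1, …, l_r`. -/
lemma exists_pm_one {r : ℕ} (h2 : r ≤ 8) (a : Fin (r + 1) → ℤ) (ha : IsRoot a) :
    ∃ k : Fin r, a k.succ = 1 ∨ a k.succ = -1 := by
  obtain ⟨haa, hak⟩ := ha
  set b : Fin r → ℤ := fun i => a i.succ with hb
  have hs1 : ∑ i : Fin r, b i = -3 * a 0 := by
    have h : a 0 * 3 - ∑ i : Fin r, a i.succ * (-1) = 0 := by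
      simpa [dpB, negK, Fin.succ_ne_zero] using hak
    have h' : ∑ i : Fin r, a i.succ * (-1) = -∑ i : Fin r, a i.succ := by
      simp [Finset.sum_neg_distrib]
    rw [h'] at h
    have : ∑ i : Fin r, b i = ∑ i : Fin r, a i.succ := rfl
    linarith
  have hs2 : ∑ i : Fin r, b i ^ 2 = a 0 ^ 2 + 2 := by
    have h : a 0 * a 0 - ∑ i : Fin r, a i.succ * a i.succ = -2 := by
      simpa [dpB] using haa
    have e : ∑ i : Fin r, b i ^ 2 = ∑ i : Fin r, a i.succ * a i.succ :=
      Finset.sum_congr rfl fun i _ => by rw [sq]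
    rw [e]; nlinarith
  by_contra hno
  push_neg at hno
  have hpt : ∀ i : Fin r, 2 * |b i| ≤ b i ^ 2 := by
    intro i
    obtain ⟨ha1, ha2⟩ := hno i
    have h1 : |b i| ≠ 1 := by
      intro h
      rcases abs_eq (by norm_num : (0:ℤ) ≤ 1) |>.mp h with h | h <;> simp_all
    rcases eq_or_ne (b i) 0 with h | h
    · simp [h]
    · have h2' : 2 ≤ |b i| := by
        have := abs_pos.mpr h
        omega
      nlinarith [sq_abs (b i)]
  have habs : |∑ i : Fin r, b i| ≤ ∑ i : Fin r, |b i| := Finset.abs_sum_le_sum_abs _ _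
  have h3a : |∑ i : Fin r, b i| = 3 * |a 0| := by
    rw [hs1, abs_mul]
    norm_num
  have hsumpt : 2 * ∑ i : Fin r, |b i| ≤ ∑ i : Fin r, b i ^ 2 := by
    rw [Finset.mul_sum]; exact Finset.sum_le_sum fun i _ => hpt i
  have h6 : 6 * |a 0| ≤ a 0 ^ 2 + 2 := by
    rw [← hs2]
    rw [h3a] at habs
    linarith
  have hcs : (∑ i : Fin r, b i) ^ 2 ≤ (r : ℤ) * ∑ i : Fin r, b i ^ 2 := by
    simpa using sq_sum_le_card_mul_sum_sq (s := (Finset.univ : Finset (Fin r))) (f := b)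
  have hr8 : (r : ℤ) ≤ 8 := by exact_mod_cast h2
  have h9 : 9 * a 0 ^ 2 ≤ 8 * (a 0 ^ 2 + 2) := by
    rw [hs1, hs2] at hcs
    nlinarith [sq_nonneg (a 0)]
  have ha0 : a 0 = 0 := by
    have hsq : a 0 ^ 2 = |a 0| * |a 0| := by rw [← sq_abs]; ring
    nlinarith [abs_nonneg (a 0)]
  have hsum2 : ∑ i : Fin r, b i ^ 2 = 2 := by rw [hs2, ha0]; ring
  have hzero : ∑ i : Fin r, b i ^ 2 = 0 := by
    apply Finset.sum_eq_zero
    intro i _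
    have hle : b i ^ 2 ≤ ∑ j : Fin r, b j ^ 2 :=
      Finset.single_le_sum (fun j _ => sq_nonneg (b j)) (Finset.mem_univ i)
    rw [hsum2] at hle
    have h2b : 2 * |b i| ≤ 2 := le_trans (hpt i) hle
    have : |b i| ≤ 1 := by omega
    obtain ⟨ha1, ha2⟩ := hno i
    have : b i = 0 := by
      rcases abs_le.mp this with ⟨hl, hr⟩
      have hbi : b i = a i.succ := rfl
      omega
    simp [this]
  rw [hzero] at hsum2
  norm_num at hsum2

/-- Every root is a difference `E - F` of two exceptional classes with `(E,F) = 0`. -/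
theorem stmt3 (r : ℕ) (h1 : 3 ≤ r) (h2 : r ≤ 8) (a : Fin (r + 1) → ℤ) (ha : IsRoot a) :
    ∃ E F : Fin (r + 1) → ℤ, IsExc E ∧ IsExc F ∧ dpB E F = 0 ∧ a = E - F := by
  obtain ⟨k, hk⟩ := exists_pm_one h2 a ha
  obtain ⟨haa, hak⟩ := ha
  have hll : dpB (l (r := r) k.succ) (l k.succ) = -1 := by
    rw [dpB_l_succ]; simp [l]
  have hal : dpB a (l k.succ) = -a k.succ := dpB_l_succ a k
  have hla : dpB (l k.succ) a = -a k.succ := by rw [dpB_comm]; exact hal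
  have hln : dpB (l k.succ) (negK (r := r)) = 1 := dpB_l_negK k
  rcases hk with hk | hk
  · -- a k.succ = 1 : E = l k.succ, F = l k.succ - a
    refine ⟨l k.succ, l k.succ - a, ⟨hll, hln⟩, ⟨?_, ?_⟩, ?_, by abel⟩
    · rw [dpB_sub_left, dpB_sub_right, dpB_sub_right, hll, hal, hla, haa, hk]; ring
    · rw [dpB_sub_left, hln, hak]; ring
    · rw [dpB_sub_right, hll, hla, hk]; ring
  · -- a k.succ = -1 : E = a + l k.succ, F = l k.succ
    refine ⟨a + l k.succ, l k.succ, ⟨?_, ?_⟩, ⟨hll, hln⟩, ?_, by abel⟩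
    · rw [dpB_add_left, dpB_add_right, dpB_add_right, hll, hal, hla, haa, hk]; ring
    · rw [dpB_add_left, hln, hak]; ring
    · rw [dpB_add_left, hll, hal, hk]; ring
end

section
/- For 2 ≤ r ≤ 7, if D ∈ ℤ^{r+1} satisfies (D,E) ≥ 0 for every exceptional class E and (D,-K) ≥ 0, then D lies in the monoid generated by the exceptional classes; for r = 8 one must additionally allow the generator -K. -/
namespace DelPezzo

variable {r : ℕ}

lemma dpB_comm (x y : Fin (r + 1) → ℤ) : dpB x y = dpB y x := by
  simp only [dpB, mul_comm]

lemma dpB_add_left (x y z : Fin (r + 1) → ℤ) : dpB (x + y) z = dpB x z + dpB y z := by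
  simp only [dpB, Pi.add_apply, add_mul, Finset.sum_add_distrib]; ring

lemma dpB_smul_left (c : ℤ) (x y : Fin (r + 1) → ℤ) : dpB (c • x) y = c * dpB x y := by
  simp only [dpB, Pi.smul_apply, smul_eq_mul, mul_assoc, ← Finset.mul_sum]; ring

lemma dpB_add_right (x y z : Fin (r + 1) → ℤ) : dpB x (y + z) = dpB x y + dpB x z := by
  rw [dpB_comm, dpB_add_left, dpB_comm y, dpB_comm z]

lemma dpB_sub_right (x y z : Fin (r + 1) → ℤ) : dpB x (y - z) = dpB x y - dpB x z := by
  rw [eq_sub_iff_add_eq, ← dpB_add_right, sub_add_cancel]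

lemma dpB_smul_right (c : ℤ) (x y : Fin (r + 1) → ℤ) : dpB x (c • y) = c * dpB x y := by
  rw [dpB_comm, dpB_smul_left, dpB_comm y]

lemma dpB_l_zero (x : Fin (r + 1) → ℤ) : dpB x (l 0) = x 0 := by
  simp [dpB, l, Fin.succ_ne_zero]

lemma dpB_l {i : Fin (r + 1)} (hi : i ≠ 0) (x : Fin (r + 1) → ℤ) : dpB x (l i) = -x i := by
  obtain ⟨j, rfl⟩ := Fin.exists_succ_eq.mpr hi
  simp [dpB, l, (Fin.succ_ne_zero j).symm]

lemma dpB_negK_l {i : Fin (r + 1)} (hi : i ≠ 0) : dpB negK (l i) = 1 := by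
  simp [dpB_l hi, negK, hi]

lemma isExc_l {i : Fin (r + 1)} (hi : i ≠ 0) : IsExc (l i) := by
  refine ⟨?_, ?_⟩
  · simp [dpB_l hi, l]
  · rw [dpB_comm, dpB_negK_l hi]

lemma isExc_l_zero_sub {i j : Fin (r + 1)} (hi : i ≠ 0) (hj : j ≠ 0) (hij : i ≠ j) :
    IsExc (l 0 - l i - l j) := by
  refine ⟨?_, ?_⟩
  · simp [dpB_sub_right, dpB_l_zero, dpB_l hi, dpB_l hj, l, hi, hj, hij, hij.symm,
      Ne.symm hi, Ne.symm hj]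
  · rw [dpB_comm]
    simp [dpB_sub_right, dpB_l_zero, dpB_negK_l hi, dpB_negK_l hj, negK]

lemma isRoot_l_sub_l {i j : Fin (r + 1)} (hi : i ≠ 0) (hj : j ≠ 0) (hij : i ≠ j) :
    IsRoot (l i - l j) := by
  refine ⟨?_, ?_⟩
  · simp [dpB_sub_right, dpB_l hi, dpB_l hj, l, hij, hij.symm]
  · rw [dpB_comm]
    simp [dpB_sub_right, dpB_negK_l hi, dpB_negK_l hj]

lemma isRoot_l_zero_sub {i j k : Fin (r + 1)} (hi : i ≠ 0) (hj : j ≠ 0) (hk : k ≠ 0)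
    (hij : i ≠ j) (hik : i ≠ k) (hjk : j ≠ k) : IsRoot (l 0 - l i - l j - l k) := by
  refine ⟨?_, ?_⟩
  · simp [dpB_sub_right, dpB_l_zero, dpB_l hi, dpB_l hj, dpB_l hk, l, hi, hj, hk, hij,
      hik, hjk, hij.symm, hik.symm, hjk.symm, Ne.symm hi, Ne.symm hj, Ne.symm hk]
  · rw [dpB_comm]
    simp [dpB_sub_right, dpB_l_zero, dpB_negK_l hi, dpB_negK_l hj, dpB_negK_l hk, negK]

lemma reflct_eq (a x : Fin (r + 1) → ℤ) : reflct a x = x + dpB x a • a := rfl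

lemma reflct_add (a x y : Fin (r + 1) → ℤ) : reflct a (x + y) = reflct a x + reflct a y := by
  simp only [reflct_eq, dpB_add_left, add_smul]; abel

lemma reflct_zero (a : Fin (r + 1) → ℤ) : reflct a 0 = 0 := by
  simpa using reflct_add a 0 0

lemma reflct_reflct {a : Fin (r + 1) → ℤ} (ha : dpB a a = -2) (x : Fin (r + 1) → ℤ) :
    reflct a (reflct a x) = x := by
  ext i
  simp only [reflct_eq, dpB_add_left, dpB_smul_left, ha, Pi.add_apply, Pi.smul_apply, smul_eq_mul]
  ring

lemma dpB_reflct_reflct {a : Fin (r + 1) → ℤ} (ha : dpB a a = -2) (x y : Fin (r + 1) → ℤ) :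
    dpB (reflct a x) (reflct a y) = dpB x y := by
  simp only [reflct_eq, dpB_add_left, dpB_add_right, dpB_smul_left, dpB_smul_right, ha]
  rw [dpB_comm y a]; ring

lemma dpB_reflct_left {a : Fin (r + 1) → ℤ} (ha : dpB a a = -2) (x y : Fin (r + 1) → ℤ) :
    dpB (reflct a x) y = dpB x (reflct a y) := by
  conv_lhs => rw [← reflct_reflct ha y]
  exact dpB_reflct_reflct ha x _

lemma reflct_negK {a : Fin (r + 1) → ℤ} (ha : IsRoot a) : reflct a negK = negK := by
  rw [reflct_eq, dpB_comm, ha.2, zero_smul, add_zero]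

lemma IsExc.reflct {a E : Fin (r + 1) → ℤ} (hE : IsExc E) (ha : IsRoot a) :
    IsExc (reflct a E) := by
  refine ⟨?_, ?_⟩
  · rw [dpB_reflct_reflct ha.1, hE.1]
  · rw [← reflct_negK ha, dpB_reflct_reflct ha.1, hE.2]

lemma reflct_mem_closure {a : Fin (r + 1) → ℤ} {S : Set (Fin (r + 1) → ℤ)}
    (hS : ∀ x ∈ S, reflct a x ∈ S) {x : Fin (r + 1) → ℤ}
    (hx : x ∈ AddSubmonoid.closure S) : reflct a x ∈ AddSubmonoid.closure S := by
  induction hx using AddSubmonoid.closure_induction with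
  | mem y hy => exact AddSubmonoid.subset_closure (hS y hy)
  | zero => rw [reflct_zero]; exact zero_mem _
  | add y z _ _ hy hz => rw [reflct_add]; exact add_mem hy hz

def IsNef (D : Fin (r + 1) → ℤ) : Prop := ∀ E, IsExc E → 0 ≤ dpB D E

lemma IsNef.reflct {a D : Fin (r + 1) → ℤ} (hD : IsNef D) (ha : IsRoot a) :
    IsNef (reflct a D) := fun E hE => by
  rw [dpB_reflct_left ha.1]; exact hD _ (IsExc.reflct hE ha)

lemma IsNef.apply_nonpos {D : Fin (r + 1) → ℤ} (hD : IsNef D) {i : Fin (r + 1)} (hi : i ≠ 0) :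
    D i ≤ 0 := by
  simpa [dpB_l hi] using hD _ (isExc_l hi)

def moment : (Fin (r + 1) → ℤ) →+ ℤ where
  toFun x := ∑ i : Fin (r + 1), ((i : ℕ) : ℤ) * x i
  map_zero' := by simp
  map_add' x y := by simp [mul_add, Finset.sum_add_distrib]

lemma moment_l (i : Fin (r + 1)) : moment (l i) = (i : ℕ) := by
  simp [moment, l]

lemma IsNef.moment_nonpos {D : Fin (r + 1) → ℤ} (hD : IsNef D) : moment D ≤ 0 := by
  change ∑ i : Fin (r + 1), ((i : ℕ) : ℤ) * D i ≤ 0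
  refine Finset.sum_nonpos fun i _ => ?_
  rcases eq_or_ne i 0 with rfl | hi
  · simp
  · exact mul_nonpos_of_nonneg_of_nonpos (by positivity) (hD.apply_nonpos hi)

lemma moment_reflct (a x : Fin (r + 1) → ℤ) :
    moment (reflct a x) = moment x + dpB x a * moment a := by
  rw [reflct_eq, map_add, map_zsmul, smul_eq_mul]

theorem mem_of_isNef_of_chamber {M : AddSubmonoid (Fin (r + 1) → ℤ)}
    (hM : ∀ a, IsRoot a → ∀ x ∈ M, reflct a x ∈ M)
    (hchamber : ∀ D : Fin (r + 1) → ℤ, IsNef D → (∀ i j, i ≠ 0 → i ≤ j → D i ≤ D j) →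
      (∀ i j k, i ≠ 0 → j ≠ 0 → k ≠ 0 → i ≠ j → i ≠ k → j ≠ k →
        0 ≤ D 0 + D i + D j + D k) → D ∈ M)
    {D : Fin (r + 1) → ℤ} (hD : IsNef D) : D ∈ M := by
  induction h : (-moment D).toNat using Nat.strong_induction_on generalizing D with
  | _ n ih =>
  have reflect : ∀ a, IsRoot a → dpB D a < 0 → moment a < 0 → D ∈ M := by
    intro a ha hDa hma
    rw [← reflct_reflct ha.1 D]
    refine hM a ha _ (ih _ ?_ (hD.reflct ha) rfl)
    have := (hD.reflct ha).moment_nonpos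
    rw [moment_reflct] at this ⊢
    have := mul_pos_of_neg_of_neg hDa hma
    omega
  by_cases hsort : ∀ i j, i ≠ 0 → i ≤ j → D i ≤ D j
  · by_cases htriple : ∀ i j k, i ≠ 0 → j ≠ 0 → k ≠ 0 → i ≠ j → i ≠ k → j ≠ k →
        0 ≤ D 0 + D i + D j + D k
    · exact hchamber D hD hsort htriple
    · push Not at htriple
      obtain ⟨i, j, k, hi, hj, hk, hij, hik, hjk, hlt⟩ := htriple
      refine reflect _ (isRoot_l_zero_sub hi hj hk hij hik hjk) ?_ ?_
      · rw [dpB_sub_right, dpB_sub_right, dpB_sub_right, dpB_l_zero, dpB_l hi, dpB_l hj,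
          dpB_l hk]
        omega
      · simp only [map_sub, moment_l, Fin.val_zero]
        have := Fin.pos_iff_ne_zero.mpr hi
        omega
  · push Not at hsort
    obtain ⟨i, j, hi, hij, hlt⟩ := hsort
    have hne : i ≠ j := by rintro rfl; exact lt_irrefl _ hlt
    have hj : j ≠ 0 := by rintro rfl; exact hi (Fin.le_zero_iff.mp hij)
    refine reflect _ (isRoot_l_sub_l hi hj hne) ?_ ?_
    · rw [dpB_sub_right, dpB_l hi, dpB_l hj]; omega
    · rw [map_sub, moment_l, moment_l]
      have := Fin.lt_def.mp (lt_of_le_of_ne hij hne)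
      omega

lemma zsmul_mem_of_nonneg {G : Type*} [AddCommGroup G] {M : AddSubmonoid G} {x : G}
    (hx : x ∈ M) {c : ℤ} (hc : 0 ≤ c) : c • x ∈ M := by
  lift c to ℕ using hc
  rw [natCast_zsmul]
  exact nsmul_mem hx c

lemma mem_of_l_mem {M : AddSubmonoid (Fin (r + 1) → ℤ)} (hl : ∀ i, i ≠ 0 → l i ∈ M)
    {x : Fin (r + 1) → ℤ} (h0 : x 0 = 0) (hx : ∀ i, 0 ≤ x i) : x ∈ M := by
  rw [← Finset.univ_sum_single x]
  refine sum_mem fun i _ => ?_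
  rcases eq_or_ne i 0 with rfl | hi
  · simp [h0]
  · have : Pi.single i (x i) = x i • l i := by ext j; simp [l, Pi.single_apply]
    rw [this]
    exact zsmul_mem_of_nonneg (hl i hi) (hx i)

lemma mem_of_three_largest {M : AddSubmonoid (Fin (r + 1) → ℤ)}
    (hl : ∀ i, i ≠ 0 → l i ∈ M) (hK : negK ∈ M) {i j k : Fin (r + 1)}
    (hi : i ≠ 0) (hj : j ≠ 0) (hij : i ≠ j)
    (hL : l 0 - l i - l j ∈ M) {D : Fin (r + 1) → ℤ} (hDi : D i ≤ D k) (hDj : D j ≤ D k)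
    (hDk : ∀ m, m ≠ 0 → m ≠ i → m ≠ j → D k ≤ D m) (hk0 : D k ≤ 0)
    (htriple : 0 ≤ D 0 + D i + D j + D k) : D ∈ M := by
  set X := (D 0 + 3 * D k) • (l 0 - l i - l j) + (D 0 + D i + 2 * D k) • l i +
    (D 0 + D j + 2 * D k) • l j + (-D k) • negK with hX
  have hXM : X ∈ M := by
    refine add_mem (add_mem (add_mem ?_ ?_) ?_) ?_ <;> apply zsmul_mem_of_nonneg <;>
      first | assumption | omega | exact hl _ ‹_›
  have hR : D - X ∈ M := by
    refine mem_of_l_mem hl ?_ fun m => ?_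
    · simp [hX, l, negK, hi.symm, hj.symm]; ring
    · rcases eq_or_ne m 0 with rfl | hm0
      · simp [hX, l, negK, hi.symm, hj.symm]; linarith
      rcases eq_or_ne m i with rfl | hmi
      · simp [hX, l, negK, hm0, hij]; linarith
      rcases eq_or_ne m j with rfl | hmj
      · simp [hX, l, negK, hm0, hij.symm]; linarith
      simp [hX, l, negK, hm0, hmi, hmj]
      linarith [hDk m hm0 hmi hmj]
  simpa using add_mem hR hXM

lemma mem_closure_of_isNef_two {D : Fin 3 → ℤ} (hD : IsNef D) :
    D ∈ AddSubmonoid.closure {E : Fin 3 → ℤ | IsExc E} := by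
  have hl : ∀ i : Fin 3, i ≠ 0 → l i ∈ AddSubmonoid.closure {E : Fin 3 → ℤ | IsExc E} :=
    fun i hi => AddSubmonoid.subset_closure (isExc_l hi)
  have hL : IsExc (l 0 - l 1 - l 2 : Fin 3 → ℤ) :=
    isExc_l_zero_sub (by decide) (by decide) (by decide)
  have h0 : 0 ≤ D 0 + D 1 + D 2 := by
    simpa [dpB_sub_right, dpB_l_zero, dpB_l] using hD _ hL
  have h1 := hD.apply_nonpos (i := 1) (by decide)
  have h2 := hD.apply_nonpos (i := 2) (by decide)
  have hR : D - D 0 • (l 0 - l 1 - l 2) ∈ AddSubmonoid.closure {E : Fin 3 → ℤ | IsExc E} :=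
    mem_of_l_mem hl (by simp [l]) fun m => by fin_cases m <;> simp [l] <;> omega
  simpa using add_mem hR (zsmul_mem_of_nonneg
    (AddSubmonoid.subset_closure (s := {E : Fin 3 → ℤ | IsExc E}) hL) (by omega : 0 ≤ D 0))

instance : DecidablePred (IsExc (r := r)) := fun _ => inferInstanceAs (Decidable (_ ∧ _))

lemma negK_mem_closure_isExc (h3 : 3 ≤ r) (h7 : r ≤ 7) :
    negK ∈ AddSubmonoid.closure {E : Fin (r + 1) → ℤ | IsExc E} := by
  obtain ⟨L, hL, hsum⟩ : ∃ L : List (Fin (r + 1) → ℤ), (∀ E ∈ L, IsExc E) ∧ L.sum = negK := by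
    interval_cases r
    · exact ⟨[![1, -1, -1, 0], ![1, -1, 0, -1], ![1, 0, -1, -1], ![0, 1, 0, 0], ![0, 0, 1, 0],
        ![0, 0, 0, 1]], by decide, by decide⟩
    · exact ⟨[![1, -1, -1, 0, 0], ![1, 0, 0, -1, -1], ![1, -1, -1, 0, 0], ![0, 1, 0, 0, 0],
        ![0, 0, 1, 0, 0]], by decide, by decide⟩
    · exact ⟨[![1, -1, -1, 0, 0, 0], ![1, 0, 0, -1, -1, 0], ![1, -1, 0, 0, 0, -1],
        ![0, 1, 0, 0, 0, 0]], by decide, by decide⟩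
    · exact ⟨[![1, -1, -1, 0, 0, 0, 0], ![1, 0, 0, -1, -1, 0, 0], ![1, 0, 0, 0, 0, -1, -1]],
        by decide, by decide⟩
    · exact ⟨[![2, -1, -1, -1, -1, -1, 0, 0], ![1, 0, 0, 0, 0, 0, -1, -1]], by decide, by decide⟩
  rw [← hsum]
  exact list_sum_mem fun E hE => AddSubmonoid.subset_closure (hL E hE)

theorem mem_closure_of_isNef (hr : 3 ≤ r) {S : Set (Fin (r + 1) → ℤ)}
    (hexc : ∀ E, IsExc E → E ∈ S) (hS : ∀ a, IsRoot a → ∀ x ∈ S, reflct a x ∈ S)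
    (hK : negK ∈ AddSubmonoid.closure S) {D : Fin (r + 1) → ℤ} (hD : IsNef D) :
    D ∈ AddSubmonoid.closure S := by
  have hl : ∀ i, i ≠ 0 → l i ∈ AddSubmonoid.closure S :=
    fun i hi => AddSubmonoid.subset_closure (hexc _ (isExc_l hi))
  refine mem_of_isNef_of_chamber (fun a ha x hx => reflct_mem_closure (hS a ha) hx) ?_ hD
  intro D hD hsort htriple
  have v1 : ((1 : Fin (r + 1)) : ℕ) = 1 := by simp; omega
  have v2 : ((2 : Fin (r + 1)) : ℕ) = 2 := by simp; omega
  have v3 : ((3 : Fin (r + 1)) : ℕ) = 3 := by simp; omega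
  have n1 : (1 : Fin (r + 1)) ≠ 0 := Fin.ne_of_val_ne (by rw [Fin.val_zero]; omega)
  have n2 : (2 : Fin (r + 1)) ≠ 0 := Fin.ne_of_val_ne (by rw [Fin.val_zero]; omega)
  have n3 : (3 : Fin (r + 1)) ≠ 0 := Fin.ne_of_val_ne (by rw [Fin.val_zero]; omega)
  have n12 : (1 : Fin (r + 1)) ≠ 2 := Fin.ne_of_val_ne (by omega)
  refine mem_of_three_largest hl hK n1 n2 n12
    (AddSubmonoid.subset_closure (hexc _ (isExc_l_zero_sub n1 n2 n12)))
    (hsort 1 3 n1 (Fin.le_def.mpr (by omega))) (hsort 2 3 n2 (Fin.le_def.mpr (by omega)))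
    (fun m hm0 hm1 hm2 => hsort 3 m n3 (Fin.le_def.mpr ?_)) (hD.apply_nonpos n3)
    (htriple 1 2 3 n1 n2 n3 n12 (Fin.ne_of_val_ne (by omega)) (Fin.ne_of_val_ne (by omega)))
  have := Fin.val_ne_iff.mpr hm0
  have := Fin.val_ne_iff.mpr hm1
  have := Fin.val_ne_iff.mpr hm2
  simp only [Fin.val_zero] at *
  omega

end DelPezzo

/-- A class with nonnegative intersection with `-K` and with all exceptional classes lies
in the monoid generated by the exceptional classes (`2 ≤ r ≤ 7`); for `r = 8` one must
also allow `-K` as a generator. -/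
theorem stmt16 :
    (∀ r : ℕ, 2 ≤ r → r ≤ 7 → ∀ D : Fin (r + 1) → ℤ,
      (∀ E, IsExc E → 0 ≤ dpB D E) → 0 ≤ dpB D negK →
      D ∈ AddSubmonoid.closure {E : Fin (r + 1) → ℤ | IsExc E}) ∧
    (∀ D : Fin 9 → ℤ,
      (∀ E, IsExc E → 0 ≤ dpB D E) → 0 ≤ dpB D negK →
      D ∈ AddSubmonoid.closure
        ({E : Fin 9 → ℤ | IsExc E} ∪ {negK})) := by
  refine ⟨fun r hr2 hr7 D hD _ => ?_, fun D hD _ => ?_⟩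
  · rcases (by omega : r = 2 ∨ 3 ≤ r) with rfl | hr3
    · exact DelPezzo.mem_closure_of_isNef_two hD
    · exact DelPezzo.mem_closure_of_isNef hr3 (fun E hE => hE)
        (fun a ha E hE => DelPezzo.IsExc.reflct hE ha)
        (DelPezzo.negK_mem_closure_isExc hr3 hr7) hD
  · refine DelPezzo.mem_closure_of_isNef (S := {E | IsExc E} ∪ {negK}) (by norm_num)
      (fun E hE => Or.inl hE) ?_ (AddSubmonoid.subset_closure (Or.inr rfl)) hD
    rintro a ha E (hE | hE)
    · exact Or.inl (DelPezzo.IsExc.reflct hE ha)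
    · rw [Set.mem_singleton_iff.mp hE, DelPezzo.reflct_negK ha]; exact Or.inr rfl
end
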